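/- arXiv:0905.1288 — 2 statements merged into one kernel-verified Lean document; each statement's English description precedes it below -/
import Mathlib

section
/- Let K be a field, q > 2 a prime, ε : Gal(ℚ̄_q/ℚ_q) → K^× a quadratic character, and ρ, ρ' : Gal(ℚ̄_q/ℚ_q) → GL_2(K) representations with ρ' ≅ ρ ⊗ ε. If ρ(I_q) and ρ'(I_q) can both be conjugated into the upper triangular matrices such that all diagonal entries of all these matrices have odd multiplicative order, then ε is unramified at q. -/
open scoped MatrixGroups

private lemma stmt5_aux {K : Type*} [Field K] {a : K} (ha : Odd (orderOf a))
    (ha' : Odd (orderOf (-a))) : (-1 : K) = 1 := by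
  have h1 : (-a) ^ (orderOf (-a) * orderOf a) = 1 := by
    rw [pow_mul, pow_orderOf_eq_one, one_pow]
  have h2 : (-a) ^ (orderOf (-a) * orderOf a) = -1 := by
    rw [neg_pow, (ha'.mul ha).neg_one_pow, pow_mul', pow_orderOf_eq_one, one_pow, mul_one]
  rw [h2] at h1
  exact h1

/-- Let `K` be a field, `q > 2` a prime, `G` the local Galois group `Gal(ℚ̄_q/ℚ_q)`
(treated abstractly) with inertia subgroup `I`, `ε : G → K^×` a quadratic character,
and `ρ, ρ' : G → GL_2(K)` representations with `ρ' ≅ ρ ⊗ ε`. If `ρ(I)` and `ρ'(I)` can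
both be conjugated into the upper triangular matrices in such a way that all diagonal
entries have odd multiplicative order, then `ε` is unramified, i.e. trivial on `I`. -/
theorem stmt5 {K : Type*} [Field K] (q : ℕ) (hq : q.Prime) (hq2 : 2 < q)
    {G : Type*} [Group G] (I : Subgroup G)
    (ε : G →* Kˣ) (hεquad : ε ^ 2 = 1)
    (ρ ρ' : G →* GL (Fin 2) K)
    (hiso : ∃ A : GL (Fin 2) K, ∀ g : G,
      ((ρ' g : Matrix (Fin 2) (Fin 2) K))
        = (A : Matrix (Fin 2) (Fin 2) K) * ((ε g : K) • (ρ g : Matrix (Fin 2) (Fin 2) K))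
            * (A⁻¹ : Matrix (Fin 2) (Fin 2) K))
    (hρ : ∃ B : GL (Fin 2) K, ∀ g ∈ I,
      ((B⁻¹ * ρ g * B : GL (Fin 2) K) : Matrix (Fin 2) (Fin 2) K) 1 0 = 0 ∧
      Odd (orderOf (((B⁻¹ * ρ g * B : GL (Fin 2) K) : Matrix (Fin 2) (Fin 2) K) 0 0)) ∧
      Odd (orderOf (((B⁻¹ * ρ g * B : GL (Fin 2) K) : Matrix (Fin 2) (Fin 2) K) 1 1)))
    (hρ' : ∃ C : GL (Fin 2) K, ∀ g ∈ I,
      ((C⁻¹ * ρ' g * C : GL (Fin 2) K) : Matrix (Fin 2) (Fin 2) K) 1 0 = 0 ∧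
      Odd (orderOf (((C⁻¹ * ρ' g * C : GL (Fin 2) K) : Matrix (Fin 2) (Fin 2) K) 0 0)) ∧
      Odd (orderOf (((C⁻¹ * ρ' g * C : GL (Fin 2) K) : Matrix (Fin 2) (Fin 2) K) 1 1))) :
    ∀ g ∈ I, ε g = 1 := by
  intro g hg
  obtain ⟨A, hA⟩ := hiso
  obtain ⟨B, hB⟩ := hρ
  obtain ⟨C, hC⟩ := hρ'
  obtain ⟨h10, ha, hb⟩ := hB g hg
  obtain ⟨h10', ha', hb'⟩ := hC g hg
  set e : K := (ε g : K) with he_def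
  set T : Matrix (Fin 2) (Fin 2) K := ((B⁻¹ * ρ g * B : GL (Fin 2) K) : Matrix (Fin 2) (Fin 2) K)
    with hT_def
  set T' : Matrix (Fin 2) (Fin 2) K := ((C⁻¹ * ρ' g * C : GL (Fin 2) K) : Matrix (Fin 2) (Fin 2) K)
    with hT'_def
  have he2 : e ^ 2 = 1 := by
    have h := congrFun (congrArg DFunLike.coe hεquad) g
    have : (ε g) ^ 2 = 1 := h
    have := congrArg (Units.val) this
    push_cast at this
    exact this
  -- trace and determinant relations
  have hTval : T = (B⁻¹ : GL (Fin 2) K).1 * (ρ g).1 * (B : GL (Fin 2) K).1 := by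
    rw [hT_def]; simp [Units.val_mul]
  have hT'val : T' = (C⁻¹ : GL (Fin 2) K).1 * (ρ' g).1 * (C : GL (Fin 2) K).1 := by
    rw [hT'_def]; simp [Units.val_mul]
  have htrT : T.trace = ((ρ g).1).trace := by
    rw [hTval, Matrix.trace_mul_cycle, ← Units.val_mul, mul_inv_cancel, Units.val_one, one_mul]
  have htrT' : T'.trace = ((ρ' g).1).trace := by
    rw [hT'val, Matrix.trace_mul_cycle, ← Units.val_mul, mul_inv_cancel, Units.val_one, one_mul]
  have hdetT : T.det = ((ρ g).1).det := by
    rw [hTval, Matrix.det_mul, Matrix.det_mul]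
    have : ((B⁻¹ : GL (Fin 2) K).1).det * ((B : GL (Fin 2) K).1).det = 1 := by
      rw [← Matrix.det_mul, ← Units.val_mul, inv_mul_cancel, Units.val_one, Matrix.det_one]
    calc ((B⁻¹ : GL (Fin 2) K).1).det * ((ρ g).1).det * ((B : GL (Fin 2) K).1).det
        = ((B⁻¹ : GL (Fin 2) K).1).det * ((B : GL (Fin 2) K).1).det * ((ρ g).1).det := by ring
      _ = ((ρ g).1).det := by rw [this, one_mul]
  have hdetT' : T'.det = ((ρ' g).1).det := by
    rw [hT'val, Matrix.det_mul, Matrix.det_mul]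
    have : ((C⁻¹ : GL (Fin 2) K).1).det * ((C : GL (Fin 2) K).1).det = 1 := by
      rw [← Matrix.det_mul, ← Units.val_mul, inv_mul_cancel, Units.val_one, Matrix.det_one]
    calc ((C⁻¹ : GL (Fin 2) K).1).det * ((ρ' g).1).det * ((C : GL (Fin 2) K).1).det
        = ((C⁻¹ : GL (Fin 2) K).1).det * ((C : GL (Fin 2) K).1).det * ((ρ' g).1).det := by ring
      _ = ((ρ' g).1).det := by rw [this, one_mul]
  have htrρ' : ((ρ' g).1).trace = e * ((ρ g).1).trace := by
    rw [he_def, hA g, ← Matrix.coe_units_inv, Matrix.trace_mul_cycle, ← Units.val_mul,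
      inv_mul_cancel, Units.val_one, one_mul, Matrix.trace_smul, smul_eq_mul]
  have hdetρ' : ((ρ' g).1).det = ((ρ g).1).det := by
    rw [hA g, ← Matrix.coe_units_inv, Matrix.det_mul, Matrix.det_mul, Matrix.det_smul]
    have hcard : Fintype.card (Fin 2) = 2 := by simp
    have h1 : ((A⁻¹ : GL (Fin 2) K).1).det * ((A : GL (Fin 2) K).1).det = 1 := by
      rw [← Matrix.det_mul, ← Units.val_mul, inv_mul_cancel, Units.val_one, Matrix.det_one]
    calc ((A : GL (Fin 2) K).1).det * (e ^ Fintype.card (Fin 2) * ((ρ g).1).det)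
          * ((A⁻¹ : GL (Fin 2) K).1).det
        = ((A⁻¹ : GL (Fin 2) K).1).det * ((A : GL (Fin 2) K).1).det
            * (e ^ Fintype.card (Fin 2) * ((ρ g).1).det) := by ring
      _ = e ^ 2 * ((ρ g).1).det := by rw [h1, one_mul, hcard]
      _ = ((ρ g).1).det := by rw [he2, one_mul]
  have hsum : T' 0 0 + T' 1 1 = e * (T 0 0 + T 1 1) := by
    have h1 : T'.trace = e * T.trace := by rw [htrT', htrρ', htrT]
    rwa [Matrix.trace_fin_two, Matrix.trace_fin_two] at h1
  have hprod : T' 0 0 * T' 1 1 = T 0 0 * T 1 1 := by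
    have h1 : T'.det = T.det := by rw [hdetT', hdetρ', hdetT]
    rw [Matrix.det_fin_two, Matrix.det_fin_two, h10, h10'] at h1
    simpa using h1
  -- e = ±1
  have he1 : e = 1 ∨ e = -1 := by
    have : e * e = 1 := by rw [← sq]; exact he2
    exact mul_self_eq_one_iff.mp this
  have hegoal : e = 1 := by
    rcases he1 with h | h
    · exact h
    · rw [h] at hsum
      have hfac : (T' 0 0 + T 0 0) * (T' 0 0 + T 1 1) = 0 := by
        linear_combination (T' 0 0) * hsum - hprod
      have hneg1 : (-1 : K) = 1 := by
        rcases mul_eq_zero.mp hfac with h0 | h0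
        · have : T' 0 0 = -(T 0 0) := eq_neg_of_add_eq_zero_left h0
          exact stmt5_aux ha (this ▸ ha')
        · have : T' 0 0 = -(T 1 1) := eq_neg_of_add_eq_zero_left h0
          exact stmt5_aux hb (this ▸ ha')
      rw [h, hneg1]
  exact Units.ext (by rw [← he_def, hegoal, Units.val_one])
end

section
/- Let K be a topological field, q a prime, ε : Gal(ℚ̄_q/ℚ_q) → K^× a character, and ρ : Gal(ℚ̄_q/ℚ_q) → GL_2(K) a representation. Suppose ρ restricted to the inertia group I_q is conjugate to upper triangular matrices of the form [[1, *],[0, δ]] with δ = det(ρ)|_{I_q}, and similarly (ρ ⊗ ε)|_{I_q} is conjugate to [[1, *],[0, δ']]. Then ε|_{I_q} = 1 or (ε·det ρ)|_{I_q} = 1. -/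
open scoped MatrixGroups

/-- Trace and determinant are invariant under conjugation in `GL`. -/
lemma stmt16_aux {K : Type*} [Field K] (A U : GL (Fin 2) K) :
    Matrix.trace ((U⁻¹ * A * U : GL (Fin 2) K) : Matrix (Fin 2) (Fin 2) K)
      = Matrix.trace (A : Matrix (Fin 2) (Fin 2) K) ∧
    Matrix.det ((U⁻¹ * A * U : GL (Fin 2) K) : Matrix (Fin 2) (Fin 2) K)
      = Matrix.det (A : Matrix (Fin 2) (Fin 2) K) := by
  have h1 : ((U⁻¹ * A * U : GL (Fin 2) K) : Matrix (Fin 2) (Fin 2) K)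
      = ((U⁻¹ : GL (Fin 2) K) : Matrix (Fin 2) (Fin 2) K) * (A : Matrix (Fin 2) (Fin 2) K)
        * (U : Matrix (Fin 2) (Fin 2) K) := rfl
  have hUU : (U : Matrix (Fin 2) (Fin 2) K) * ((U⁻¹ : GL (Fin 2) K) : Matrix (Fin 2) (Fin 2) K)
      = 1 := Units.mul_inv U
  constructor
  · rw [h1, Matrix.trace_mul_comm, ← mul_assoc, hUU, one_mul]
  · rw [h1, Matrix.det_mul, Matrix.det_mul]
    have h2 : Matrix.det ((U⁻¹ : GL (Fin 2) K) : Matrix (Fin 2) (Fin 2) K)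
        * Matrix.det (U : Matrix (Fin 2) (Fin 2) K) = 1 := by
      rw [← Matrix.det_mul]
      have : ((U⁻¹ : GL (Fin 2) K) : Matrix (Fin 2) (Fin 2) K)
          * (U : Matrix (Fin 2) (Fin 2) K) = 1 := Units.inv_mul U
      rw [this, Matrix.det_one]
    linear_combination Matrix.det ((A : Matrix (Fin 2) (Fin 2) K)) * h2

/-- Let `K` be a topological field, `G` the local Galois group `Gal(ℚ̄_q/ℚ_q)` (treated
abstractly), `I ≤ G` the inertia subgroup, `ε : G → K^×` a character and
`ρ : G → GL_2(K)` a representation. If `ρ|_I` is conjugate to matrices of the form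
`[[1, *], [0, δ]]` (with `δ = det ρ|_I`) and likewise `(ρ ⊗ ε)|_I` is conjugate to
matrices of the form `[[1, *], [0, δ']]`, then `ε|_I = 1` or `(ε · det ρ)|_I = 1`. -/
theorem stmt16 {K : Type*} [Field K] [TopologicalSpace K] (q : ℕ) (hq : q.Prime)
    {G : Type*} [Group G] (I : Subgroup G)
    (ε : G →* Kˣ) (ρ : G →* GL (Fin 2) K)
    (hρ : ∃ B : GL (Fin 2) K, ∀ g ∈ I,
      ((B⁻¹ * ρ g * B : GL (Fin 2) K) : Matrix (Fin 2) (Fin 2) K) 1 0 = 0 ∧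
      ((B⁻¹ * ρ g * B : GL (Fin 2) K) : Matrix (Fin 2) (Fin 2) K) 0 0 = 1)
    (hρε : ∃ C : GL (Fin 2) K, ∀ g ∈ I,
      ((ε g : K) • ((C⁻¹ * ρ g * C : GL (Fin 2) K) : Matrix (Fin 2) (Fin 2) K)) 1 0 = 0 ∧
      ((ε g : K) • ((C⁻¹ * ρ g * C : GL (Fin 2) K) : Matrix (Fin 2) (Fin 2) K)) 0 0 = 1) :
    (∀ g ∈ I, (ε g : K) = 1) ∨
      (∀ g ∈ I, (ε g : K) * ((ρ g : Matrix (Fin 2) (Fin 2) K)).det = 1) := by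
  obtain ⟨B, hB⟩ := hρ
  obtain ⟨C, hC⟩ := hρε
  -- pointwise dichotomy
  have key : ∀ g ∈ I, (ε g : K) = 1 ∨
      (ε g : K) * ((ρ g : Matrix (Fin 2) (Fin 2) K)).det = 1 := by
    intro g hg
    obtain ⟨hB1, hB2⟩ := hB g hg
    obtain ⟨hC1, hC2⟩ := hC g hg
    set e : K := (ε g : K) with he
    set d : K := ((ρ g : Matrix (Fin 2) (Fin 2) K)).det with hd
    have he0 : e ≠ 0 := (ε g).ne_zero
    set M : Matrix (Fin 2) (Fin 2) K := ((B⁻¹ * ρ g * B : GL (Fin 2) K) : Matrix (Fin 2) (Fin 2) K) with hM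
    set N : Matrix (Fin 2) (Fin 2) K := ((C⁻¹ * ρ g * C : GL (Fin 2) K) : Matrix (Fin 2) (Fin 2) K) with hN
    obtain ⟨htM, hdM⟩ := stmt16_aux (ρ g) B
    obtain ⟨htN, hdN⟩ := stmt16_aux (ρ g) C
    rw [← hM] at htM hdM
    rw [← hN] at htN hdN
    -- entries
    simp only [Matrix.smul_apply, smul_eq_mul] at hC1 hC2
    have hN10 : N 1 0 = 0 := by
      rcases mul_eq_zero.mp hC1 with h | h
      · exact absurd h he0
      · exact h
    -- dets and traces in terms of entries
    rw [Matrix.det_fin_two, hB1, hB2] at hdM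
    rw [Matrix.det_fin_two, hN10] at hdN
    rw [Matrix.trace_fin_two, hB2] at htM
    rw [Matrix.trace_fin_two] at htN
    -- trace of ρ g equals 1 + d (from B) and N00 + N11 (from C)
    have htr : N 0 0 + N 1 1 = 1 + d := by
      rw [htN, ← htM]
      linear_combination hdM
    have hdet : N 0 0 * N 1 1 = d := by linear_combination hdN
    -- derive the factored identity
    have hb : N 1 1 = e * d := by linear_combination e * hdet - N 1 1 * hC2
    rw [hb] at htr
    have hfact : (e - 1) * (e * d - 1) = 0 := by linear_combination e * htr - hC2
    rcases mul_eq_zero.mp hfact with h | h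
    · left; linear_combination h
    · right; linear_combination h
  -- a group is not the union of two proper subgroups
  by_contra h
  push_neg at h
  obtain ⟨⟨g0, hg0, hg0e⟩, ⟨g1, hg1, hg1e⟩⟩ := h
  have h0 : (ε g0 : K) * ((ρ g0 : Matrix (Fin 2) (Fin 2) K)).det = 1 :=
    (key g0 hg0).resolve_left hg0e
  have h1 : (ε g1 : K) = 1 := (key g1 hg1).resolve_right hg1e
  have hmem : g0 * g1 ∈ I := mul_mem hg0 hg1
  have hεmul : (ε (g0 * g1) : K) = (ε g0 : K) * (ε g1 : K) := by
    rw [map_mul]; rfl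
  have hdmul : ((ρ (g0 * g1) : Matrix (Fin 2) (Fin 2) K)).det
      = ((ρ g0 : Matrix (Fin 2) (Fin 2) K)).det * ((ρ g1 : Matrix (Fin 2) (Fin 2) K)).det := by
    rw [map_mul]
    exact Matrix.det_mul _ _
  rcases key _ hmem with h | h
  · rw [hεmul, h1, mul_one] at h
    exact hg0e h
  · rw [hεmul, hdmul, h1, mul_one] at h
    apply hg1e
    rw [h1, one_mul]
    linear_combination h - ((ρ g1 : Matrix (Fin 2) (Fin 2) K)).det * h0
end
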